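/- arXiv:math/9904126 — 6 statements merged into one kernel-verified Lean document; each statement's English description precedes it below -/
import Mathlib

section
/- Let t, q be complex numbers with 0 < |q| < |t| < 1. Then all denominators 1 - t^{-1} q^m are nonzero, the series ∑_{m∈ℤ} t^m/(1 - t^{-1} q^m) converges absolutely, and its sum equals 0. -/
/-!
For `m ≥ 1` expand `t^m / (1 - t⁻¹ q^m)` as a geometric series in `t⁻¹ q^m`, and for `m = -b ≤ 0`
rewrite it as `-t^{1-b} q^b / (1 - t q^b)` and expand in `t q^b`. Both families of expansions are
the rows, resp. the columns, of the single absolutely convergent double series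
`∑_{a,b ≥ 0} t^{a+1-b} q^{(a+1)b}` (bounded by `∑ |t|^{a+1} (|q|/|t|)^b`). Summing it by rows and by
columns gives `∑_{m ≥ 1} = S = -∑_{m ≤ 0}`, so the bilateral sum vanishes.
-/

theorem HasSum.of_nat_add_one_of_neg {G : Type*} [AddCommGroup G] [TopologicalSpace G]
    [IsTopologicalAddGroup G] {f : ℤ → G} {a b : G}
    (h₁ : HasSum (fun n : ℕ => f (n + 1)) a) (h₂ : HasSum (fun n : ℕ => f (-n)) b) :
    HasSum f (a + b) := by
  have h₀ : HasSum (fun n : ℕ => f n) (a + f 0) := by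
    refine (hasSum_nat_add_iff' 1).1 ?_
    simpa using h₁
  have h := h₀.of_nat_of_neg h₂
  rwa [add_right_comm, add_sub_cancel_right] at h

theorem summable_norm_of_hasSum_fiberwise {β γ E : Type*} [NormedAddCommGroup E]
    {G : β × γ → E} {f : β → E} (hG : Summable fun p => ‖G p‖)
    (hf : ∀ b, HasSum (fun c => G (b, c)) (f b)) : Summable fun b => ‖f b‖ :=
  hG.prod.of_nonneg_of_le (fun _ => norm_nonneg _) fun b =>
    (hf b).tsum_eq ▸ norm_tsum_le_tsum_norm (hG.prod_factor b)

namespace ResidueSeries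

variable {𝕜 : Type*} [NormedField 𝕜]

def term (q t : 𝕜) (m : ℤ) : 𝕜 := t ^ m / (1 - t⁻¹ * q ^ m)

/-- `t^{a+1-b} q^{(a+1)b}`, written with natural exponents. -/
def doubleTerm (q t : 𝕜) (p : ℕ × ℕ) : 𝕜 := t ^ (p.1 + 1) * (t⁻¹ * q ^ (p.1 + 1)) ^ p.2

theorem norm_inv_mul_pow_succ_lt_one {q t : 𝕜} (hqt : ‖q‖ < ‖t‖) (hq : ‖q‖ ≤ 1) (a : ℕ) :
    ‖t⁻¹ * q ^ (a + 1)‖ < 1 := by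
  have ht₀ : 0 < ‖t‖ := (norm_nonneg q).trans_lt hqt
  rw [norm_mul, norm_inv, norm_pow]
  calc ‖t‖⁻¹ * ‖q‖ ^ (a + 1) ≤ ‖t‖⁻¹ * ‖q‖ := by
        gcongr; exact pow_le_of_le_one (norm_nonneg q) hq a.succ_ne_zero
    _ < 1 := by rwa [inv_mul_lt_one₀ ht₀]

theorem norm_mul_pow_lt_one {q t : 𝕜} (ht : ‖t‖ < 1) (hq : ‖q‖ ≤ 1) (b : ℕ) :
    ‖t * q ^ b‖ < 1 := by
  rw [norm_mul, norm_pow]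
  exact (mul_le_of_le_one_right (norm_nonneg t) (pow_le_one₀ (norm_nonneg q) hq)).trans_lt ht

theorem one_sub_inv_mul_zpow_neg (q t : 𝕜) (b : ℕ) :
    1 - t⁻¹ * q ^ (-b : ℤ) = 1 - (t * q ^ b)⁻¹ := by
  rw [zpow_neg, zpow_natCast, mul_inv]

theorem one_sub_inv_mul_zpow_ne_zero {q t : 𝕜} (hqt : ‖q‖ < ‖t‖) (ht : ‖t‖ < 1) (m : ℤ) :
    1 - t⁻¹ * q ^ m ≠ 0 := by
  have hq : ‖q‖ ≤ 1 := (hqt.trans ht).le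
  rcases lt_or_ge 0 m with hm | hm
  · obtain ⟨a, rfl⟩ := Int.eq_succ_of_zero_lt hm
    rw [← Nat.cast_succ, zpow_natCast]
    exact sub_ne_zero.2 fun h => by simpa [← h] using norm_inv_mul_pow_succ_lt_one hqt hq a
  · obtain ⟨b, rfl⟩ := Int.exists_eq_neg_ofNat hm
    rw [one_sub_inv_mul_zpow_neg]
    exact sub_ne_zero.2 fun h => by simpa [inv_eq_one.1 h.symm] using norm_mul_pow_lt_one ht hq b

theorem norm_doubleTerm_le {q : 𝕜} (t : 𝕜) (hq : ‖q‖ ≤ 1) (p : ℕ × ℕ) :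
    ‖doubleTerm q t p‖ ≤ ‖t‖ ^ (p.1 + 1) * (‖t‖⁻¹ * ‖q‖) ^ p.2 := by
  rw [doubleTerm, norm_mul, norm_pow, norm_pow, norm_mul, norm_inv, norm_pow]
  gcongr
  exact pow_le_of_le_one (norm_nonneg q) hq p.1.succ_ne_zero

theorem summable_norm_doubleTerm {q t : 𝕜} (hqt : ‖q‖ < ‖t‖) (ht : ‖t‖ < 1) :
    Summable fun p => ‖doubleTerm q t p‖ := by
  have ht₀ : 0 < ‖t‖ := (norm_nonneg q).trans_lt hqt
  have hratio : ‖t‖⁻¹ * ‖q‖ < 1 := by rwa [inv_mul_lt_one₀ ht₀]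
  refine .of_nonneg_of_le (fun _ => norm_nonneg _) (norm_doubleTerm_le t (hqt.trans ht).le) ?_
  refine Summable.mul_of_nonneg (f := fun a : ℕ => ‖t‖ ^ (a + 1))
    (g := fun b : ℕ => (‖t‖⁻¹ * ‖q‖) ^ b) ?_ ?_ (fun _ => by positivity) fun _ => by positivity
  · exact (summable_nat_add_iff 1).2 (summable_geometric_of_lt_one ht₀.le ht)
  · exact summable_geometric_of_lt_one (by positivity) hratio

theorem hasSum_doubleTerm_row {q t : 𝕜} {a : ℕ} (h : ‖t⁻¹ * q ^ (a + 1)‖ < 1) :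
    HasSum (fun b => doubleTerm q t (a, b)) (term q t (a + 1)) := by
  rw [term, ← Nat.cast_succ, zpow_natCast, zpow_natCast, div_eq_mul_inv]
  exact (hasSum_geometric_of_norm_lt_one h).mul_left (t ^ (a + 1))

theorem hasSum_doubleTerm_column {q t : 𝕜} (ht : t ≠ 0) (hq : q ≠ 0) {b : ℕ}
    (h : ‖t * q ^ b‖ < 1) :
    HasSum (fun a => doubleTerm q t (a, b)) (-term q t (-b)) := by
  have hcolumn : (fun a => doubleTerm q t (a, b)) =
      fun a => t * q ^ b / t ^ b * (t * q ^ b) ^ a :=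
    funext fun a => by simp only [doubleTerm]; ring
  have hvalue : -term q t (-b) = t * q ^ b / t ^ b * (1 - t * q ^ b)⁻¹ := by
    have hy : t * q ^ b ≠ 0 := mul_ne_zero ht (pow_ne_zero b hq)
    have hden : 1 - t * q ^ b ≠ 0 := sub_ne_zero.2 fun h1 => by simp [← h1] at h
    have hden' : t * q ^ b - 1 ≠ 0 := sub_ne_zero.2 fun h1 => by simp [h1] at h
    rw [term, one_sub_inv_mul_zpow_neg, zpow_neg, zpow_natCast]
    field_simp
    ring
  rw [hcolumn, hvalue]
  exact (hasSum_geometric_of_norm_lt_one h).mul_left _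

end ResidueSeries

open ResidueSeries in
/-- The residue-vanishing computation in the proof of the key identity (11) of the paper:
for `0 < |q| < |t| < 1`, all denominators `1 - t⁻¹ q^m` are nonzero, the series
`∑_{m ∈ ℤ} t^m / (1 - t⁻¹ q^m)` converges absolutely, and its sum equals `0`. -/
theorem residue_sum_eq_zero (q t : ℂ)
    (hq : 0 < ‖q‖) (hqt : ‖q‖ < ‖t‖)
    (ht : ‖t‖ < 1) :
    (∀ m : ℤ, 1 - t⁻¹ * q ^ m ≠ 0) ∧
    Summable (fun m : ℤ => ‖t ^ m / (1 - t⁻¹ * q ^ m)‖) ∧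
    ∑' m : ℤ, t ^ m / (1 - t⁻¹ * q ^ m) = 0 := by
  have hq₁ : ‖q‖ ≤ 1 := (hqt.trans ht).le
  have hG := summable_norm_doubleTerm hqt ht
  have hrow a := hasSum_doubleTerm_row (norm_inv_mul_pow_succ_lt_one hqt hq₁ a)
  have hcolumn b := hasSum_doubleTerm_column (norm_pos_iff.1 (hq.trans hqt)) (norm_pos_iff.1 hq)
    (norm_mul_pow_lt_one ht hq₁ b)
  refine ⟨one_sub_inv_mul_zpow_ne_zero hqt ht, ?_, ?_⟩
  · have hneg := summable_norm_of_hasSum_fiberwise (G := fun p => doubleTerm q t p.swap)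
      (hG.comp_injective Prod.swap_injective) hcolumn
    simp only [norm_neg] at hneg
    exact (HasSum.of_nat_add_one_of_neg (f := fun m => ‖term q t m‖)
      (summable_norm_of_hasSum_fiberwise hG hrow).hasSum hneg.hasSum).summable
  · have hsum := hG.of_norm.hasSum
    have hpos := hsum.prod_fiberwise hrow
    have hneg := (((Equiv.prodComm ℕ ℕ).hasSum_iff.2 hsum).prod_fiberwise hcolumn).neg
    simp only [neg_neg] at hneg
    have htotal := HasSum.of_nat_add_one_of_neg (f := term q t) hpos hneg
    rw [add_neg_cancel] at htotal
    exact htotal.tsum_eq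
end

section
/- Let q, t, y be complex numbers with 0 < |q| < |t| < 1 and y ≠ 0, such that y·q^m ≠ 1 for every integer m, and t·y·q^{k-1} ≠ 1 and t^{-1}·y^{-1}·q^k ≠ 1 for every integer k ≥ 1. Define L(y) = ∏_{k≥1} [(1 - t y q^{k-1})(1 - t^{-1} y^{-1} q^k)] / [(1 - t q^{k-1})(1 - t^{-1} q^k)] and R(y) = (∑_{m∈ℤ} t^m/(1 - y q^m)) · G(y,q), where G(y,q) = ∏_{k≥1} (1 - y q^{k-1})(1 - y^{-1} q^k)/(1 - q^k)^2. Then L(yq) = -t^{-1} y^{-1} L(y) and R(yq) = -t^{-1} y^{-1} R(y), i.e., both sides of identity (11) acquire the factor -t^{-1} y^{-1} under the substitution y ↦ yq. -/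
/-!
Both sides are quotients of the theta product `θ(c) = (c; q)_∞ (q/c; q)_∞`:
`L(y) = θ(ty) / θ(t)` and `G(y) = θ(y) / (q; q)_∞²`. Peeling off the first factor,
`(a; q)_∞ = (1 - a) (aq; q)_∞`, turns `θ(c)` into `(1 - c) (cq; q)_∞ (q/c; q)_∞` and `θ(cq)` into
`(cq; q)_∞ (1 - c⁻¹) (q/c; q)_∞`, so `θ(cq) = -c⁻¹ θ(c)`; this handles `L` and `G`. The bilateral
sum picks up the factor `t⁻¹` by the reindexing `m ↦ m + 1`.
-/

/-- `Gfun y q = ∏_{k ≥ 1} (1 - y q^{k-1})(1 - y⁻¹ q^k) / (1 - q^k)^2`. -/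
noncomputable def Gfun (y q : ℂ) : ℂ :=
  ∏' k : ℕ, ((1 - y * q ^ k) * (1 - y⁻¹ * q ^ (k + 1))) / (1 - q ^ (k + 1)) ^ 2

/-- The left-hand side of identity (11):
`L(y) = ∏_{k ≥ 1} (1 - t y q^{k-1})(1 - t⁻¹ y⁻¹ q^k) / ((1 - t q^{k-1})(1 - t⁻¹ q^k))`. -/
noncomputable def Lfun (t q y : ℂ) : ℂ :=
  ∏' k : ℕ, ((1 - t * y * q ^ k) * (1 - t⁻¹ * y⁻¹ * q ^ (k + 1))) /
    ((1 - t * q ^ k) * (1 - t⁻¹ * q ^ (k + 1)))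

/-- The right-hand side of identity (11):
`R(y) = (∑_{m ∈ ℤ} t^m / (1 - y q^m)) ⬝ G(y,q)`. -/
noncomputable def Rfun (t q y : ℂ) : ℂ :=
  (∑' m : ℤ, t ^ m / (1 - y * q ^ m)) * Gfun y q

theorem summable_norm_mul_pow {𝕜 : Type*} [NormedField 𝕜] {q : 𝕜} (hq : ‖q‖ < 1) (a : 𝕜) :
    Summable fun k : ℕ ↦ ‖a * q ^ k‖ := by
  simpa [norm_mul, norm_pow] using (summable_geometric_of_lt_one (norm_nonneg q) hq).mul_left ‖a‖

noncomputable def qPochhammer {𝕜 : Type*} [NormedField 𝕜] (a q : 𝕜) : 𝕜 :=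
  ∏' k : ℕ, (1 - a * q ^ k)

noncomputable def qTheta {𝕜 : Type*} [NormedField 𝕜] (c q : 𝕜) : 𝕜 :=
  qPochhammer c q * qPochhammer (c⁻¹ * q) q

section QPochhammer

variable {𝕜 : Type*} [NormedField 𝕜] [CompleteSpace 𝕜] {q : 𝕜}

theorem hasProd_qPochhammer (hq : ‖q‖ < 1) (a : 𝕜) :
    HasProd (fun k : ℕ ↦ 1 - a * q ^ k) (qPochhammer a q) := by
  simp_rw [qPochhammer, sub_eq_add_neg]
  exact (multipliable_one_add_of_summable (f := fun k ↦ -(a * q ^ k))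
    (by simpa only [norm_neg] using summable_norm_mul_pow hq a)).hasProd

theorem qPochhammer_ne_zero (hq : ‖q‖ < 1) {a : 𝕜} (ha : ‖a‖ < 1) : qPochhammer a q ≠ 0 := by
  have hlt (k : ℕ) : ‖a * q ^ k‖ < 1 := by
    rw [norm_mul, norm_pow]
    exact mul_lt_one_of_nonneg_of_lt_one_left (norm_nonneg a) ha
      (pow_le_one₀ (norm_nonneg q) hq.le)
  simp_rw [qPochhammer, sub_eq_add_neg]
  refine tprod_one_add_ne_zero_of_summable (f := fun k ↦ -(a * q ^ k)) (fun k h ↦ ?_)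
    (by simpa only [norm_neg] using summable_norm_mul_pow hq a)
  exact (hlt k).ne (by simpa using congr_arg norm (eq_neg_of_add_eq_zero_right h))

theorem qPochhammer_eq_one_sub_mul (hq : ‖q‖ < 1) (a : 𝕜) :
    qPochhammer a q = (1 - a) * qPochhammer (a * q) q := by
  have hshift : Multipliable fun k : ℕ ↦ 1 - a * q ^ (k + 1) := by
    simpa only [pow_succ', mul_assoc] using (hasProd_qPochhammer hq (a * q)).multipliable
  rw [qPochhammer, tprod_eq_zero_mul' (f := fun k ↦ 1 - a * q ^ k) hshift, qPochhammer,
    pow_zero, mul_one]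
  exact congrArg _ (tprod_congr fun k ↦ by ring)

theorem hasProd_qTheta (hq : ‖q‖ < 1) (c : 𝕜) :
    HasProd (fun k : ℕ ↦ (1 - c * q ^ k) * (1 - c⁻¹ * q ^ (k + 1))) (qTheta c q) := by
  simp_rw [pow_succ', ← mul_assoc]
  exact (hasProd_qPochhammer hq c).mul (hasProd_qPochhammer hq (c⁻¹ * q))

theorem qTheta_ne_zero {c : 𝕜} (hqc : ‖q‖ < ‖c‖) (hc : ‖c‖ < 1) : qTheta c q ≠ 0 := by
  have hq : ‖q‖ < 1 := hqc.trans hc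
  have hcq : ‖c⁻¹ * q‖ < 1 := by
    rw [norm_mul, norm_inv, inv_mul_lt_one₀ ((norm_nonneg q).trans_lt hqc)]
    exact hqc
  exact mul_ne_zero (qPochhammer_ne_zero hq hc) (qPochhammer_ne_zero hq hcq)

theorem qTheta_mul_right (hq : ‖q‖ < 1) (hq0 : q ≠ 0) {c : 𝕜} (hc : c ≠ 0) :
    qTheta (c * q) q = -c⁻¹ * qTheta c q := by
  rw [qTheta, qTheta, mul_inv, mul_assoc, inv_mul_cancel₀ hq0, mul_one,
    qPochhammer_eq_one_sub_mul hq c⁻¹, qPochhammer_eq_one_sub_mul hq c]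
  field_simp
  ring

end QPochhammer

theorem tsum_zpow_div_one_sub_mul_mul_zpow {𝕜 : Type*} [NormedField 𝕜] {q : 𝕜} (hq : q ≠ 0)
    {t : 𝕜} (ht : t ≠ 0) (y : 𝕜) :
    ∑' m : ℤ, t ^ m / (1 - y * q * q ^ m) = t⁻¹ * ∑' m : ℤ, t ^ m / (1 - y * q ^ m) := by
  calc ∑' m : ℤ, t ^ m / (1 - y * q * q ^ m)
      = ∑' m : ℤ, t⁻¹ * (t ^ (m + 1) / (1 - y * q ^ (m + 1))) := by
        refine tsum_congr fun m ↦ ?_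
        rw [zpow_add_one₀ hq, zpow_add_one₀ ht]
        field_simp
    _ = t⁻¹ * ∑' m : ℤ, t ^ m / (1 - y * q ^ m) := by
        rw [tsum_mul_left]
        exact congrArg _ ((Equiv.addRight (1 : ℤ)).tsum_eq fun m ↦ t ^ m / (1 - y * q ^ m))

theorem Lfun_eq_qTheta_div {q t : ℂ} (hq : ‖q‖ < 1) (ht : qTheta t q ≠ 0) (y : ℂ) :
    Lfun t q y = qTheta (t * y) q / qTheta t q := by
  rw [Lfun, ← ((hasProd_qTheta hq (t * y)).div₀ (hasProd_qTheta hq t) ht).tprod_eq, mul_inv]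

theorem Gfun_eq_qTheta_div {q : ℂ} (hq : ‖q‖ < 1) (y : ℂ) :
    Gfun y q = qTheta y q / qPochhammer q q ^ 2 := by
  have hden : HasProd (fun k : ℕ ↦ (1 - q ^ (k + 1)) ^ 2) (qPochhammer q q ^ 2) := by
    simpa only [← pow_succ'] using (hasProd_qPochhammer hq q).pow 2
  have hP : qPochhammer q q ≠ 0 := qPochhammer_ne_zero hq hq
  rw [Gfun, ← ((hasProd_qTheta hq y).div₀ hden (pow_ne_zero 2 hP)).tprod_eq]

theorem both_sides_quasi_periodic_general (q t y : ℂ)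
    (hq : 0 < ‖q‖) (hqt : ‖q‖ < ‖t‖)
    (ht : ‖t‖ < 1) (hy : y ≠ 0) :
    Lfun t q (y * q) = -t⁻¹ * y⁻¹ * Lfun t q y ∧
    Rfun t q (y * q) = -t⁻¹ * y⁻¹ * Rfun t q y := by
  have hq1 : ‖q‖ < 1 := hqt.trans ht
  have hq0 : q ≠ 0 := norm_pos_iff.mp hq
  have ht0 : t ≠ 0 := norm_pos_iff.mp (hq.trans hqt)
  have hθt : qTheta t q ≠ 0 := qTheta_ne_zero hqt ht
  constructor
  · rw [Lfun_eq_qTheta_div hq1 hθt, Lfun_eq_qTheta_div hq1 hθt, ← mul_assoc,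
      qTheta_mul_right hq1 hq0 (mul_ne_zero ht0 hy), mul_inv]
    ring
  · rw [Rfun, Rfun, Gfun_eq_qTheta_div hq1, Gfun_eq_qTheta_div hq1,
      qTheta_mul_right hq1 hq0 hy, tsum_zpow_div_one_sub_mul_mul_zpow hq0 ht0]
    ring

/-- Double periodicity (the main step of the paper's elementary proof of identity (11)):
under the substitution `y ↦ y q`, both sides of (11) acquire the factor `-t⁻¹ y⁻¹`. -/
theorem both_sides_quasi_periodic (q t y : ℂ)
    (hq : 0 < ‖q‖) (hqt : ‖q‖ < ‖t‖)
    (ht : ‖t‖ < 1) (hy : y ≠ 0)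
    (hyq : ∀ m : ℤ, y * q ^ m ≠ 1)
    (hty : ∀ k : ℕ, 1 ≤ k → t * y * q ^ (k - 1) ≠ 1 ∧ t⁻¹ * y⁻¹ * q ^ k ≠ 1) :
    Lfun t q (y * q) = -t⁻¹ * y⁻¹ * Lfun t q y ∧
    Rfun t q (y * q) = -t⁻¹ * y⁻¹ * Rfun t q y :=
  both_sides_quasi_periodic_general q t y hq hqt ht hy
end

section
/- For all complex numbers x, y with |x| < 1 and |y| < 1, the double series ∑ (-1)^{a+b} x^a y^b, taken over all pairs of positive integers (a,b) such that min(a,b) is odd, converges absolutely and equals x y / [(1 + x)(1 + y)(1 + x y)]. -/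
/-!
With `u = -x` and `v = -y` the summand is `u ^ a * v ^ b`. A pair whose minimum is the odd number
`2k + 1` is uniquely `(2k + 1, 2k + 1) + (i, j)` with `i = 0` or `j = 0`, so the sum factors as
`∑ₖ (uv) ^ (2k + 1) = uv / (1 - u²v²)` times the sum over the axes. The latter is the full double
geometric series minus its diagonal shift by `(1, 1)`, i.e. `(1 - uv) / ((1 - u)(1 - v))`.
-/

def shiftDiag (m : ℕ) (p : ℕ × ℕ) : ℕ × ℕ := (p.1 + m, p.2 + m)

def axisPairs : Set (ℕ × ℕ) := {p | p.1 = 0 ∨ p.2 = 0}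

def oddMinPairs : Set (ℕ × ℕ) := {p | 0 < p.1 ∧ 0 < p.2 ∧ Odd (min p.1 p.2)}

lemma shiftDiag_injective (m : ℕ) : Function.Injective (shiftDiag m) := by
  intro p q h
  simp only [shiftDiag, Prod.ext_iff] at h
  exact Prod.ext (by omega) (by omega)

lemma range_shiftDiag_one : Set.range (shiftDiag 1) = axisPairsᶜ := by
  ext ⟨a, b⟩
  simp only [Set.mem_range, shiftDiag, Prod.ext_iff, Set.mem_compl_iff, axisPairs,
    Set.mem_ofPred_eq, Prod.exists]
  constructor
  · rintro ⟨i, j, rfl, rfl⟩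
    omega
  · intro h
    exact ⟨a - 1, b - 1, by omega, by omega⟩

def oddMinParam (q : ℕ × axisPairs) : ℕ × ℕ := shiftDiag (2 * q.1 + 1) q.2

lemma oddMinParam_injective : Function.Injective oddMinParam := by
  rintro ⟨k, ⟨⟨i, j⟩, hij⟩⟩ ⟨l, ⟨⟨i', j'⟩, hij'⟩⟩ h
  simp only [axisPairs, Set.mem_ofPred_eq] at hij hij'
  simp only [oddMinParam, shiftDiag, Prod.ext_iff] at h
  simp only [Prod.ext_iff, Subtype.ext_iff]
  omega

lemma range_oddMinParam : Set.range oddMinParam = oddMinPairs := by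
  ext ⟨a, b⟩
  simp only [oddMinPairs, Set.mem_ofPred_eq, Nat.odd_iff]
  constructor
  · rintro ⟨⟨k, ⟨⟨i, j⟩, hij⟩⟩, h⟩
    simp only [axisPairs, Set.mem_ofPred_eq] at hij
    simp only [oddMinParam, shiftDiag, Prod.ext_iff] at h
    omega
  · rintro ⟨ha, hb, hmin⟩
    refine ⟨⟨(min a b - 1) / 2, ⟨(a - min a b, b - min a b), ?_⟩⟩, ?_⟩
    · simp only [axisPairs, Set.mem_ofPred_eq]
      omega
    · simp only [oddMinParam, shiftDiag, Prod.ext_iff]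
      omega

lemma pow_mul_pow_shiftDiag {M : Type*} [CommMonoid M] (u v : M) (m : ℕ) (p : ℕ × ℕ) :
    u ^ (shiftDiag m p).1 * v ^ (shiftDiag m p).2 = (u * v) ^ m * (u ^ p.1 * v ^ p.2) := by
  simp only [shiftDiag, pow_add, mul_pow]
  ac_rfl

variable {𝕜 : Type*} [NormedField 𝕜] {u v : 𝕜}

lemma summable_norm_pow_mul_pow (hu : ‖u‖ < 1) (hv : ‖v‖ < 1) :
    Summable fun p : ℕ × ℕ => ‖u ^ p.1 * v ^ p.2‖ :=
  (summable_norm_geometric_of_norm_lt_one hu).mul_norm (summable_norm_geometric_of_norm_lt_one hv)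

variable [CompleteSpace 𝕜]

lemma tsum_pow_mul_pow (hu : ‖u‖ < 1) (hv : ‖v‖ < 1) :
    ∑' p : ℕ × ℕ, u ^ p.1 * v ^ p.2 = ((1 - u) * (1 - v))⁻¹ := by
  rw [← tsum_mul_tsum_of_summable_norm (summable_norm_geometric_of_norm_lt_one hu)
    (summable_norm_geometric_of_norm_lt_one hv), tsum_geometric_of_norm_lt_one hu,
    tsum_geometric_of_norm_lt_one hv, mul_inv]

lemma tsum_axisPairs_pow_mul_pow (hu : ‖u‖ < 1) (hv : ‖v‖ < 1) :
    ∑' p : axisPairs, u ^ p.1.1 * v ^ p.1.2 = (1 - u * v) * ((1 - u) * (1 - v))⁻¹ := by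
  have hsum := (summable_norm_pow_mul_pow hu hv).of_norm
  have hcompl : ∑' p : (axisPairsᶜ : Set (ℕ × ℕ)), u ^ p.1.1 * v ^ p.1.2 =
      u * v * ((1 - u) * (1 - v))⁻¹ := by
    rw [← range_shiftDiag_one, tsum_range (fun p : ℕ × ℕ => u ^ p.1 * v ^ p.2)
      (shiftDiag_injective 1)]
    simp only [pow_mul_pow_shiftDiag, pow_one]
    rw [tsum_mul_left, tsum_pow_mul_pow hu hv]
  have hsplit := (hsum.subtype axisPairs).tsum_add_tsum_compl (s := axisPairs) (hsum.subtype _)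
  rw [tsum_pow_mul_pow hu hv, hcompl] at hsplit
  linear_combination hsplit

lemma tsum_oddMinPairs_pow_mul_pow (hu : ‖u‖ < 1) (hv : ‖v‖ < 1) :
    ∑' p : oddMinPairs, u ^ p.1.1 * v ^ p.1.2 = u * v / ((1 - u) * (1 - v) * (1 + u * v)) := by
  have huv : ‖u * v‖ < 1 := by
    rw [norm_mul]
    exact mul_lt_one_of_nonneg_of_lt_one_left (norm_nonneg u) hu hv.le
  have huv2 : ‖(u * v) ^ 2‖ < 1 := by
    rw [norm_pow]
    exact pow_lt_one₀ (norm_nonneg _) huv two_ne_zero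
  have hodd : ∑' k : ℕ, (u * v) ^ (2 * k + 1) = (1 - (u * v) ^ 2)⁻¹ * (u * v) := by
    rw [tsum_congr fun k => by rw [pow_succ, pow_mul], tsum_mul_right,
      tsum_geometric_of_norm_lt_one huv2]
  have hodd_norm : Summable fun k : ℕ => ‖(u * v) ^ (2 * k + 1)‖ :=
    (summable_norm_geometric_of_norm_lt_one huv).comp_injective
      (fun k l h => by simpa using h)
  rw [← range_oddMinParam, tsum_range (fun p : ℕ × ℕ => u ^ p.1 * v ^ p.2)
    oddMinParam_injective]
  simp only [oddMinParam, pow_mul_pow_shiftDiag]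
  rw [← tsum_mul_tsum_of_summable_norm (g := fun p : axisPairs => u ^ p.1.1 * v ^ p.1.2)
    hodd_norm ((summable_norm_pow_mul_pow hu hv).subtype axisPairs), hodd,
    tsum_axisPairs_pow_mul_pow hu hv]
  have h1u := (isUnit_one_sub_of_norm_lt_one hu).ne_zero
  have h1v := (isUnit_one_sub_of_norm_lt_one hv).ne_zero
  have h1uv := (isUnit_one_sub_of_norm_lt_one huv).ne_zero
  have h1uv' : 1 + u * v ≠ 0 := by
    simpa using (isUnit_one_sub_of_norm_lt_one (x := -(u * v)) (by rwa [norm_neg])).ne_zero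
  rw [show 1 - (u * v) ^ 2 = (1 - u * v) * (1 + u * v) by ring]
  field_simp

/-- The expansion used in the paper's elementary proof of the ℙ² identity: for `|x| < 1` and
`|y| < 1`, the double series `∑ (-1)^{a+b} x^a y^b`, over all pairs of positive integers
`(a,b)` with `min(a,b)` odd, converges absolutely and equals
`x y / ((1+x)(1+y)(1+xy))`. -/
theorem xy_expansion (x y : ℂ) (hx : ‖x‖ < 1) (hy : ‖y‖ < 1) :
    Summable (fun p : {p : ℕ × ℕ // 0 < p.1 ∧ 0 < p.2 ∧ Odd (min p.1 p.2)} =>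
      ‖(-1 : ℂ) ^ (p.1.1 + p.1.2) * x ^ p.1.1 * y ^ p.1.2‖) ∧
    (∑' p : {p : ℕ × ℕ // 0 < p.1 ∧ 0 < p.2 ∧ Odd (min p.1 p.2)},
        (-1 : ℂ) ^ (p.1.1 + p.1.2) * x ^ p.1.1 * y ^ p.1.2) =
      x * y / ((1 + x) * (1 + y) * (1 + x * y)) := by
  have hterm (a b : ℕ) : (-1 : ℂ) ^ (a + b) * x ^ a * y ^ b = (-x) ^ a * (-y) ^ b := by
    rw [pow_add, neg_pow x, neg_pow y]
    ring
  have hx' : ‖-x‖ < 1 := by rwa [norm_neg]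
  have hy' : ‖-y‖ < 1 := by rwa [norm_neg]
  simp only [hterm]
  exact ⟨(summable_norm_pow_mul_pow hx' hy').subtype oddMinPairs,
    (tsum_oddMinPairs_pow_mul_pow hx' hy').trans (by ring)⟩
end

section
/- For every positive integer d, the number of quadruples (a, b, m, n) of positive integers satisfying m a + n b = d, min(a,b) odd, and a + b odd, equals the number of quadruples (a, b, m, n) of positive integers satisfying m a + n b = d, min(a,b) odd, a + b even, and m ≠ n. (Explicitly, the map sending (a,b,m,n) with a+b even and m ≠ n to (a+b, b, m, n-m) if n > m and to (a, a+b, m-n, n) if m > n is a bijection onto the set of quadruples with a+b odd, with inverse sending (a,b,m,n) with a+b odd to (a-b, b, m, m+n) if a > b and to (a, b-a, m+n, n) if b > a.) -/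
/-!
The map `(a, b, m, n) ↦ (a + b, b, m, n - m)` if `m < n`, `(a, a + b, m - n, n)` if `n < m`,
preserves `m a + n b`. When `min a b` is odd and `a + b` even, `a` and `b` are both odd, so the
image has odd coordinate sum and its smaller entry is one of the old `a`, `b`. Conversely, if
`min a b` is odd and `a + b` odd then `a ≠ b`, and subtracting the smaller entry from the larger
one (and adding the corresponding multipliers) undoes the map.
-/

namespace ParityBijection

abbrev Quad := ℕ × ℕ × ℕ × ℕ

def oddQuads (d : ℕ) : Set Quad :=
  {x | 0 < x.1 ∧ 0 < x.2.1 ∧ 0 < x.2.2.1 ∧ 0 < x.2.2.2 ∧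
    x.2.2.1 * x.1 + x.2.2.2 * x.2.1 = d ∧ Odd (min x.1 x.2.1) ∧ Odd (x.1 + x.2.1)}

def evenQuads (d : ℕ) : Set Quad :=
  {x | 0 < x.1 ∧ 0 < x.2.1 ∧ 0 < x.2.2.1 ∧ 0 < x.2.2.2 ∧
    x.2.2.1 * x.1 + x.2.2.2 * x.2.1 = d ∧ Odd (min x.1 x.2.1) ∧
    Even (x.1 + x.2.1) ∧ x.2.2.1 ≠ x.2.2.2}

variable {d a b m n : ℕ}

theorem mem_oddQuads : (a, b, m, n) ∈ oddQuads d ↔ 0 < a ∧ 0 < b ∧ 0 < m ∧ 0 < n ∧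
    m * a + n * b = d ∧ Odd (min a b) ∧ Odd (a + b) := Iff.rfl

theorem mem_evenQuads : (a, b, m, n) ∈ evenQuads d ↔ 0 < a ∧ 0 < b ∧ 0 < m ∧ 0 < n ∧
    m * a + n * b = d ∧ Odd (min a b) ∧ Even (a + b) ∧ m ≠ n := Iff.rfl

def raise : Quad → Quad
  | (a, b, m, n) => if m < n then (a + b, b, m, n - m) else (a, a + b, m - n, n)

def lower : Quad → Quad
  | (a, b, m, n) => if b < a then (a - b, b, m, m + n) else (a, b - a, m + n, n)

theorem mapsTo_raise : Set.MapsTo raise (evenQuads d) (oddQuads d) := by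
  rintro ⟨a, b, m, n⟩ hx
  obtain ⟨ha, hb, hm, hn, rfl, hmin, hsum, hmn⟩ := mem_evenQuads.1 hx
  simp only [Nat.odd_iff, Nat.even_iff] at hmin hsum
  rcases lt_or_gt_of_ne hmn with h | h
  · obtain ⟨k, rfl⟩ := Nat.exists_eq_add_of_le h.le
    simp only [raise, h, if_true, mem_oddQuads, Nat.odd_iff, Nat.add_sub_cancel_left]
    exact ⟨by omega, hb, hm, by omega, by ring, by omega, by omega⟩
  · obtain ⟨k, rfl⟩ := Nat.exists_eq_add_of_le h.le
    simp only [raise, h.not_gt, if_false, mem_oddQuads, Nat.odd_iff, Nat.add_sub_cancel_left]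
    exact ⟨ha, by omega, by omega, hn, by ring, by omega, by omega⟩

theorem mapsTo_lower : Set.MapsTo lower (oddQuads d) (evenQuads d) := by
  rintro ⟨a, b, m, n⟩ hx
  obtain ⟨ha, hb, hm, hn, rfl, hmin, hsum⟩ := mem_oddQuads.1 hx
  simp only [Nat.odd_iff] at hmin hsum
  rcases lt_or_gt_of_ne (show a ≠ b by omega) with h | h
  · obtain ⟨k, rfl⟩ := Nat.exists_eq_add_of_le h.le
    simp only [lower, h.not_gt, if_false, mem_evenQuads, Nat.odd_iff, Nat.even_iff,
      Nat.add_sub_cancel_left]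
    exact ⟨ha, by omega, by omega, hn, by ring, by omega, by omega, by omega⟩
  · obtain ⟨k, rfl⟩ := Nat.exists_eq_add_of_le h.le
    simp only [lower, h, if_true, mem_evenQuads, Nat.odd_iff, Nat.even_iff,
      Nat.add_sub_cancel_left]
    exact ⟨by omega, hb, hm, by omega, by ring, by omega, by omega, by omega⟩

theorem leftInvOn_lower_raise : Set.LeftInvOn lower raise (evenQuads d) := by
  rintro ⟨a, b, m, n⟩ hx
  obtain ⟨ha, -, -, -, -, -, -, hmn⟩ := mem_evenQuads.1 hx
  rcases lt_or_gt_of_ne hmn with h | h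
  · simp [raise, lower, h, ha, Nat.add_sub_cancel' h.le]
  · simp [raise, lower, h.not_gt, Nat.sub_add_cancel h.le]

theorem rightInvOn_lower_raise : Set.RightInvOn lower raise (oddQuads d) := by
  rintro ⟨a, b, m, n⟩ hx
  obtain ⟨-, -, -, hn, -, hmin, hsum⟩ := mem_oddQuads.1 hx
  simp only [Nat.odd_iff] at hmin hsum
  rcases lt_or_gt_of_ne (show a ≠ b by omega) with h | h
  · simp [raise, lower, h.not_gt, Nat.add_sub_cancel' h.le]
  · simp [raise, lower, h, hn, Nat.sub_add_cancel h.le]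

theorem bijOn_raise : Set.BijOn raise (evenQuads d) (oddQuads d) :=
  Set.InvOn.bijOn ⟨leftInvOn_lower_raise, rightInvOn_lower_raise⟩ mapsTo_raise mapsTo_lower

end ParityBijection

theorem parity_bijection_count_general (d : ℕ) :
    {x : ℕ × ℕ × ℕ × ℕ | 0 < x.1 ∧ 0 < x.2.1 ∧ 0 < x.2.2.1 ∧ 0 < x.2.2.2 ∧
        x.2.2.1 * x.1 + x.2.2.2 * x.2.1 = d ∧ Odd (min x.1 x.2.1) ∧
        Odd (x.1 + x.2.1)}.ncard =
    {x : ℕ × ℕ × ℕ × ℕ | 0 < x.1 ∧ 0 < x.2.1 ∧ 0 < x.2.2.1 ∧ 0 < x.2.2.2 ∧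
        x.2.2.1 * x.1 + x.2.2.2 * x.2.1 = d ∧ Odd (min x.1 x.2.1) ∧
        Even (x.1 + x.2.1) ∧ x.2.2.1 ≠ x.2.2.2}.ncard :=
  ParityBijection.bijOn_raise.ncard_eq.symm

/-- The parity bijection count in the paper's elementary proof of the ℙ² identity:
for every positive integer `d`, the number of quadruples `(a,b,m,n)` of positive integers
with `m a + n b = d`, `min(a,b)` odd, and `a + b` odd, equals the number of quadruples
`(a,b,m,n)` of positive integers with `m a + n b = d`, `min(a,b)` odd, `a + b` even and
`m ≠ n`. -/
theorem parity_bijection_count (d : ℕ) (hd : 0 < d) :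
    {x : ℕ × ℕ × ℕ × ℕ | 0 < x.1 ∧ 0 < x.2.1 ∧ 0 < x.2.2.1 ∧ 0 < x.2.2.2 ∧
        x.2.2.1 * x.1 + x.2.2.2 * x.2.1 = d ∧ Odd (min x.1 x.2.1) ∧
        Odd (x.1 + x.2.1)}.ncard =
    {x : ℕ × ℕ × ℕ × ℕ | 0 < x.1 ∧ 0 < x.2.1 ∧ 0 < x.2.2.1 ∧ 0 < x.2.2.2 ∧
        x.2.2.1 * x.1 + x.2.2.2 * x.2.1 = d ∧ Odd (min x.1 x.2.1) ∧
        Even (x.1 + x.2.1) ∧ x.2.2.1 ≠ x.2.2.2}.ncard :=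
  parity_bijection_count_general d
end

section
/- For every positive integer d, the alternating sum ∑ (-1)^{a+b}, taken over all quadruples (a, b, m, n) of positive integers with m a + n b = d and min(a,b) odd, equals the number of triples (a, b, m) of positive integers with m(a + b) = d, min(a,b) odd, and a + b even. -/
/-!
The two Euclid moves `(a, b, m, n) ↦ (a + b, b, m, n - m)` and `(a, b, m, n) ↦ (a, a + b, m - n, n)`
preserve `m a + n b`. When `a, b` are both odd one of them applies (according as `m < n` or
`n < m`), and it produces a quadruple in which exactly one of the first two entries is even and
`min(a, b)` is still odd; the inverse moves go back. This pairs off every quadruple except those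
with `m = n` and `a + b` even, and the two quadruples of a pair have `a + b` of opposite parity,
so only the unpaired ones survive in the alternating sum, each contributing `1`.
-/

open Set

theorem finsum_mem_eq_zero_of_involution {α M : Type*} [AddCommGroup M] [IsAddTorsionFree M]
    {s : Set α} {f : α → M} (σ : α → α) (hs : s.Finite) (hσ : MapsTo σ s s)
    (hσσ : ∀ x ∈ s, σ (σ x) = x) (hf : ∀ x ∈ s, f (σ x) = -f x) :
    ∑ᶠ x ∈ s, f x = 0 := by
  have hbij : BijOn σ s s := InvOn.bijOn ⟨hσσ, hσσ⟩ hσ hσ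
  rw [← neg_eq_self]
  calc -∑ᶠ x ∈ s, f x = ∑ᶠ x ∈ s, -f x := (finsum_mem_neg_distrib f hs).symm
    _ = ∑ᶠ x ∈ s, f (σ x) := finsum_mem_congr rfl fun x hx ↦ (hf x hx).symm
    _ = ∑ᶠ x ∈ s, f x := finsum_mem_eq_of_bijOn σ hbij fun _ _ ↦ rfl

def oddMinReps (d : ℕ) : Set (ℕ × ℕ × ℕ × ℕ) :=
  {x | 0 < x.1 ∧ 0 < x.2.1 ∧ 0 < x.2.2.1 ∧ 0 < x.2.2.2 ∧
    x.2.2.1 * x.1 + x.2.2.2 * x.2.1 = d ∧ Odd (min x.1 x.2.1)}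

def evenDiagonal : Set (ℕ × ℕ × ℕ × ℕ) :=
  {x | x.2.2.1 = x.2.2.2 ∧ Even (x.1 + x.2.1)}

def diagonalOddMinReps (d : ℕ) : Set (ℕ × ℕ × ℕ) :=
  {p | 0 < p.1 ∧ 0 < p.2.1 ∧ 0 < p.2.2 ∧ p.2.2 * (p.1 + p.2.1) = d ∧ Odd (min p.1 p.2.1) ∧
    Even (p.1 + p.2.1)}

theorem oddMinReps_finite (d : ℕ) : (oddMinReps d).Finite := by
  refine ((finite_Iic d).prod ((finite_Iic d).prod ((finite_Iic d).prod (finite_Iic d)))).subset ?_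
  rintro ⟨a, b, m, n⟩ ⟨ha, hb, hm, hn, rfl, -⟩
  simp only [mem_prod, mem_Iic]
  refine ⟨?_, ?_, ?_, ?_⟩ <;> nlinarith

theorem image_diagonalOddMinReps (d : ℕ) :
    (fun p : ℕ × ℕ × ℕ ↦ (p.1, p.2.1, p.2.2, p.2.2)) '' diagonalOddMinReps d =
      oddMinReps d ∩ evenDiagonal := by
  ext ⟨a, b, m, n⟩
  simp only [diagonalOddMinReps, oddMinReps, evenDiagonal, mem_image, mem_inter_iff,
    mem_ofPred_eq, Prod.exists, Prod.mk.injEq]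
  constructor
  · rintro ⟨a, b, m, ⟨ha, hb, hm, rfl, hmin, heven⟩, rfl, rfl, rfl, rfl⟩
    exact ⟨⟨ha, hb, hm, hm, by ring, hmin⟩, rfl, heven⟩
  · rintro ⟨⟨ha, hb, hm, -, rfl, hmin⟩, rfl, heven⟩
    exact ⟨a, b, m, ⟨ha, hb, hm, by ring, hmin, heven⟩, rfl, rfl, rfl, rfl⟩

theorem ncard_oddMinReps_inter_evenDiagonal (d : ℕ) :
    (oddMinReps d ∩ evenDiagonal).ncard = (diagonalOddMinReps d).ncard := by
  rw [← image_diagonalOddMinReps, ncard_image_of_injective]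
  rintro ⟨a, b, m⟩ ⟨a', b', m'⟩ h
  simp_all

def parityInvolution : ℕ × ℕ × ℕ × ℕ → ℕ × ℕ × ℕ × ℕ
  | (a, b, m, n) =>
    if Even a then (a - b, b, m, n + m)
    else if Even b then (a, b - a, m + n, n)
    else if m < n then (a + b, b, m, n - m)
    else (a, a + b, m - n, n)

section parityInvolution

variable {a b : ℕ}

theorem parityInvolution_mul_add_mul (m n : ℕ) (hmin : Odd (min a b)) :
    let x := parityInvolution (a, b, m, n)
    x.2.2.1 * x.1 + x.2.2.2 * x.2.1 = m * a + n * b := by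
  simp only [parityInvolution]
  split_ifs with ha hb hmn
  · have hba : b ≤ a := by grind
    zify [hba]; ring
  · have hab : a ≤ b := by grind
    zify [hab]; ring
  · zify [hmn.le]; ring
  · zify [not_lt.mp hmn]; ring

theorem even_parityInvolution_add_iff (m n : ℕ) (hmin : Odd (min a b)) :
    Even ((parityInvolution (a, b, m, n)).1 + (parityInvolution (a, b, m, n)).2.1) ↔
      ¬Even (a + b) := by
  simp only [parityInvolution]
  split_ifs <;> grind

theorem parityInvolution_parityInvolution {m n : ℕ} (hn : 0 < n) (hmin : Odd (min a b)) :
    parityInvolution (parityInvolution (a, b, m, n)) = (a, b, m, n) := by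
  simp only [parityInvolution]
  split_ifs <;> simp only [Prod.mk.injEq] <;> grind

theorem neg_one_pow_parityInvolution {R : Type*} [Monoid R] [HasDistribNeg R] (m n : ℕ)
    (hmin : Odd (min a b)) :
    (-1 : R) ^ ((parityInvolution (a, b, m, n)).1 + (parityInvolution (a, b, m, n)).2.1) =
      -(-1) ^ (a + b) := by
  rw [neg_one_pow_congr ((even_parityInvolution_add_iff m n hmin).trans Nat.even_add_one.symm),
    pow_succ, mul_neg_one]

end parityInvolution

theorem parityInvolution_mapsTo (d : ℕ) :
    MapsTo parityInvolution (oddMinReps d \ evenDiagonal) (oddMinReps d \ evenDiagonal) := by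
  rintro ⟨a, b, m, n⟩ ⟨⟨ha, hb, hm, hn, rfl, hmin⟩, hdiag⟩
  have hw := parityInvolution_mul_add_mul m n hmin
  have hpar := even_parityInvolution_add_iff m n hmin
  simp only [oddMinReps, evenDiagonal, mem_sdiff, mem_ofPred_eq] at hdiag hw ⊢
  simp only [parityInvolution] at hw hpar ⊢
  split_ifs at hw hpar ⊢ <;> grind

theorem alternating_sum_eq_diagonal_count_general (d : ℕ) :
    (∑ᶠ x ∈ {x : ℕ × ℕ × ℕ × ℕ | 0 < x.1 ∧ 0 < x.2.1 ∧ 0 < x.2.2.1 ∧ 0 < x.2.2.2 ∧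
        x.2.2.1 * x.1 + x.2.2.2 * x.2.1 = d ∧ Odd (min x.1 x.2.1)},
      ((-1 : ℤ) ^ (x.1 + x.2.1))) =
    ({p : ℕ × ℕ × ℕ | 0 < p.1 ∧ 0 < p.2.1 ∧ 0 < p.2.2 ∧
        p.2.2 * (p.1 + p.2.1) = d ∧ Odd (min p.1 p.2.1) ∧
        Even (p.1 + p.2.1)}.ncard : ℤ) := by
  change ∑ᶠ x ∈ oddMinReps d, (-1 : ℤ) ^ (x.1 + x.2.1) = ((diagonalOddMinReps d).ncard : ℤ)
  have hfin := oddMinReps_finite d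
  have hoff : ∑ᶠ x ∈ oddMinReps d \ evenDiagonal, (-1 : ℤ) ^ (x.1 + x.2.1) = 0 := by
    refine finsum_mem_eq_zero_of_involution _ hfin.sdiff (parityInvolution_mapsTo d) ?_ ?_
    · rintro ⟨a, b, m, n⟩ ⟨⟨-, -, -, hn, -, hmin⟩, -⟩
      exact parityInvolution_parityInvolution hn hmin
    · rintro ⟨a, b, m, n⟩ ⟨⟨-, -, -, -, -, hmin⟩, -⟩
      exact neg_one_pow_parityInvolution m n hmin
  have hdiag : ∑ᶠ x ∈ oddMinReps d ∩ evenDiagonal, (-1 : ℤ) ^ (x.1 + x.2.1) =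
      (oddMinReps d ∩ evenDiagonal).ncard := by
    rw [← finsum_one, Nat.cast_finsum_mem (hfin.inter_of_left _), Nat.cast_one]
    exact finsum_mem_congr rfl fun x hx ↦ hx.2.2.neg_one_pow
  rw [← finsum_mem_inter_add_sdiff evenDiagonal hfin, hoff, hdiag, add_zero,
    ncard_oddMinReps_inter_evenDiagonal]

/-- The intermediate counting identity in the paper's elementary proof of the ℙ² identity:
for every positive integer `d`, the alternating sum `∑ (-1)^{a+b}` over all quadruples
`(a,b,m,n)` of positive integers with `m a + n b = d` and `min(a,b)` odd equals the number
of triples `(a,b,m)` of positive integers with `m (a+b) = d`, `min(a,b)` odd and `a + b`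
even. -/
theorem alternating_sum_eq_diagonal_count (d : ℕ) (hd : 0 < d) :
    (∑ᶠ x ∈ {x : ℕ × ℕ × ℕ × ℕ | 0 < x.1 ∧ 0 < x.2.1 ∧ 0 < x.2.2.1 ∧ 0 < x.2.2.2 ∧
        x.2.2.1 * x.1 + x.2.2.2 * x.2.1 = d ∧ Odd (min x.1 x.2.1)},
      ((-1 : ℤ) ^ (x.1 + x.2.1))) =
    ({p : ℕ × ℕ × ℕ | 0 < p.1 ∧ 0 < p.2.1 ∧ 0 < p.2.2 ∧
        p.2.2 * (p.1 + p.2.1) = d ∧ Odd (min p.1 p.2.1) ∧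
        Even (p.1 + p.2.1)}.ncard : ℤ) :=
  alternating_sum_eq_diagonal_count_general d
end

section
/- For every positive integer r, the number of triples (a, b, m) of positive integers with m(a + b) = 2r, min(a,b) odd, and a + b even equals σ(r), the sum of the positive divisors of r. Moreover, for odd positive integers d there are no triples (a, b, m) of positive integers with m(a + b) = d, min(a,b) odd, and a + b even. -/
/-!
Since `min(a, b)` is odd and `a + b` is even, both `a` and `b` are odd, so `a + b = 2s` and
`m s = r`. For each divisor `s` of `r`, the odd `a = 2j + 1 < 2s` (i.e. `j < s`) determine the
triple `(2j + 1, 2s - (2j + 1), r / s)`, giving `∑_{s ∣ r} s = σ(r)` triples in all.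
If `m (a + b)` is odd, `a + b` cannot be even.
-/

def IsDiagonalTriple (N : ℕ) (p : ℕ × ℕ × ℕ) : Prop :=
  0 < p.1 ∧ 0 < p.2.1 ∧ 0 < p.2.2 ∧ p.2.2 * (p.1 + p.2.1) = N ∧ Odd (min p.1 p.2.1) ∧
    Even (p.1 + p.2.1)

def diagonalTriple (r : ℕ) (x : Σ _ : ℕ, ℕ) : ℕ × ℕ × ℕ :=
  (2 * x.2 + 1, 2 * x.1 - (2 * x.2 + 1), r / x.1)

theorem Nat.odd_and_odd_of_odd_min_of_even_add {a b : ℕ} (hmin : Odd (min a b))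
    (hsum : Even (a + b)) : Odd a ∧ Odd b := by
  have hab : Even a ↔ Even b := Nat.even_add.mp hsum
  rcases min_choice a b with h | h <;> rw [h] at hmin
  · exact ⟨hmin, Nat.not_even_iff_odd.mp fun hb => Nat.not_even_iff_odd.mpr hmin (hab.mpr hb)⟩
  · exact ⟨Nat.not_even_iff_odd.mp fun ha => Nat.not_even_iff_odd.mpr hmin (hab.mp ha), hmin⟩

theorem not_isDiagonalTriple_of_odd {N : ℕ} (hN : Odd N) (p : ℕ × ℕ × ℕ) :
    ¬ IsDiagonalTriple N p := by
  rintro ⟨-, -, -, hN', -, hsum⟩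
  exact Nat.not_even_iff_odd.mpr hN (hN' ▸ hsum.mul_left _)

theorem isDiagonalTriple_diagonalTriple {r s j : ℕ} (hs : s ∈ r.divisors) (hj : j < s) :
    IsDiagonalTriple (2 * r) (diagonalTriple r ⟨s, j⟩) := by
  obtain ⟨⟨m, rfl⟩, hr⟩ := Nat.mem_divisors.mp hs
  have hm : 0 < m := Nat.pos_of_ne_zero (right_ne_zero_of_mul hr)
  have hsum : 2 * j + 1 + (2 * s - (2 * j + 1)) = 2 * s := by omega
  simp only [IsDiagonalTriple, diagonalTriple, Nat.mul_div_cancel_left _ (by omega : 0 < s), hsum]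
  refine ⟨by omega, by omega, hm, by ring, ?_, even_two_mul s⟩
  · rcases min_cases (2 * j + 1) (2 * s - (2 * j + 1)) with ⟨h, -⟩ | ⟨h, -⟩ <;> rw [h]
    · exact odd_two_mul_add_one j
    · exact ⟨s - j - 1, by omega⟩

theorem exists_diagonalTriple_eq {r : ℕ} {p : ℕ × ℕ × ℕ}
    (hp : IsDiagonalTriple (2 * r) p) :
    ∃ s j, s ∈ r.divisors ∧ j < s ∧ diagonalTriple r ⟨s, j⟩ = p := by
  obtain ⟨a, b, m⟩ := p
  obtain ⟨-, hb, hm, hmul, hmin, ⟨s, hs⟩⟩ := hp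
  obtain ⟨⟨j, rfl⟩, -⟩ := Nat.odd_and_odd_of_odd_min_of_even_add hmin ⟨s, hs⟩
  dsimp only at hm hmul hs
  have hms : m * s = r := by rw [hs] at hmul; linarith
  have hs0 : 0 < s := by omega
  refine ⟨s, j, Nat.mem_divisors.mpr ⟨⟨m, by rw [← hms, mul_comm]⟩, ?_⟩, by omega, ?_⟩
  · rw [← hms]; positivity
  simp only [diagonalTriple, ← hms, Nat.mul_div_cancel _ hs0, Prod.mk.injEq, true_and, and_true]
  omega

theorem diagonalTriple_injOn (r : ℕ) :
    Set.InjOn (diagonalTriple r) (r.divisors.sigma Finset.range) := by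
  rintro ⟨s, j⟩ hx ⟨t, k⟩ hy h
  simp only [Finset.coe_sigma, Set.mem_sigma_iff, Finset.mem_coe, Finset.mem_range] at hx hy
  simp only [diagonalTriple, Prod.mk.injEq] at h
  obtain rfl : j = k := by omega
  obtain rfl : s = t := by omega
  rfl

theorem setOf_isDiagonalTriple_two_mul (r : ℕ) :
    {p | IsDiagonalTriple (2 * r) p} = diagonalTriple r '' (r.divisors.sigma Finset.range) := by
  ext p
  simp only [Set.mem_image, Finset.coe_sigma, Set.mem_sigma_iff, Finset.mem_coe,
    Finset.mem_range, Sigma.exists]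
  constructor
  · intro hp
    obtain ⟨s, j, hs, hj, rfl⟩ := exists_diagonalTriple_eq hp
    exact ⟨s, j, ⟨hs, hj⟩, rfl⟩
  · rintro ⟨s, j, ⟨hs, hj⟩, rfl⟩
    exact isDiagonalTriple_diagonalTriple hs hj

theorem ncard_setOf_isDiagonalTriple_two_mul (r : ℕ) :
    {p | IsDiagonalTriple (2 * r) p}.ncard = ∑ k ∈ r.divisors, k := by
  rw [setOf_isDiagonalTriple_two_mul, (diagonalTriple_injOn r).ncard_image,
    Set.ncard_coe_finset, Finset.card_sigma]
  simp only [Finset.card_range]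

/-- The final counting step in the paper's elementary proof of the ℙ² identity:
for every positive integer `r`, the number of triples `(a,b,m)` of positive integers with
`m (a+b) = 2r`, `min(a,b)` odd and `a + b` even equals `σ(r)`, the sum of the positive
divisors of `r`; and for odd positive integers `d` there are no triples `(a,b,m)` of
positive integers with `m (a+b) = d`, `min(a,b)` odd and `a + b` even. -/
theorem diagonal_count_eq_sigma :
    (∀ r : ℕ, 0 < r →
      {p : ℕ × ℕ × ℕ | 0 < p.1 ∧ 0 < p.2.1 ∧ 0 < p.2.2 ∧
        p.2.2 * (p.1 + p.2.1) = 2 * r ∧ Odd (min p.1 p.2.1) ∧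
        Even (p.1 + p.2.1)}.ncard = ∑ k ∈ r.divisors, k) ∧
    (∀ d : ℕ, Odd d →
      {p : ℕ × ℕ × ℕ | 0 < p.1 ∧ 0 < p.2.1 ∧ 0 < p.2.2 ∧
        p.2.2 * (p.1 + p.2.1) = d ∧ Odd (min p.1 p.2.1) ∧
        Even (p.1 + p.2.1)} = ∅) :=
  ⟨fun r _ => ncard_setOf_isDiagonalTriple_two_mul r,
    fun _ hd => Set.eq_empty_of_forall_notMem (not_isDiagonalTriple_of_odd hd)⟩
end
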